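/- In the braided Atiyah sequence setting, the map δ: P ⊗ Hom_B(T,P) → Hom_B(T,P) defined by (δ_Y ρ)(X) := [Y, ρ(X)] − (R_α▷ρ)([R^α▷Y^π, X]) is an action of the K-braided Lie algebra P; that is, it is K-equivariant, k ▷ (δ_Y ρ) = δ_{k₍₁₎▷Y}(k₍₂₎▷ρ), and it respects the braided bracket: δ_{[Y,Y']} = δ_Y ∘ δ_{Y'} − δ_{R_α▷Y'} ∘ δ_{R^α▷Y} for all Y, Y' ∈ P. -/

import Mathlib

/-!
STATEMENT 3: in the braided Atiyah sequence setting, the map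
`δ : P ⊗ Hom_B(T,P) → Hom_B(T,P)` defined by
`(δ_Y ρ)(X) := [Y, ρ(X)] − (R_α▷ρ)([R^α▷Y^π, X])`
is an action of the `K`-braided Lie algebra `P`; that is, it is
`K`-equivariant, `k ▷ (δ_Y ρ) = δ_{k₍₁₎▷Y}(k₍₂₎▷ρ)`, and it respects the
braided bracket: `δ_{[Y,Y']} = δ_Y ∘ δ_{Y'} − δ_{R_α▷Y'} ∘ δ_{R^α▷Y}` for all
`Y, Y' ∈ P`.

Setting: `(K,R)` is a triangular Hopf algebra over a field `k`, with `R`-matrix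
`R = Σ_i r1 i ⊗ r2 i = R^α ⊗ R_α`.  There is an exact sequence
`0 → g → P →^π T → 0` of `K`-braided Lie algebras: `B` is a quasi-commutative
`K`-module algebra; `P`, `T` are `B`-bimodules (left action `lP`, `lT`; the
right action is `Y·b := (R_α▷b)(R^α▷Y)`), with `π` a right `B`-module morphism
and a morphism of braided Lie algebras; `(B,T)` and `(B,P)` are braided
Lie–Rinehart pairs, `T = Der^R(B)` acting on `B` by braided derivations
(`actTB`) and `Y ∈ P` acting through `Y^π = π(Y)`.  `Hom_B(T,P)` is the space
of right `B`-linear maps with the adjoint `K`-action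
`(κ▷η)(X) = κ₍₁₎ ▷ η(S(κ₍₂₎) ▷ X)` (`adAct`).
-/

noncomputable section
open scoped TensorProduct BigOperators
open TensorProduct

namespace Statement3

variable {k : Type*} [Field k]
variable {K : Type*} [Ring K] [HopfAlgebra k K]
variable {M g : Type*} [AddCommGroup M] [Module k M] [AddCommGroup g] [Module k g]

/-- adjoint action of `κ ∈ K` on one-forms: `(κ▷η)(Y) = κ₍₁₎ ▷ η(S(κ₍₂₎) ▷ Y)` -/
def adAct (aM : K →ₗ[k] Module.End k M) (ag : K →ₗ[k] Module.End k g)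
    (κ : K) (η : M →ₗ[k] g) : M →ₗ[k] g :=
  TensorProduct.lift
    (LinearMap.mk₂ k (fun a c => ag a ∘ₗ η ∘ₗ aM (HopfAlgebra.antipode (R := k) c))
      (fun a a' c => by ext m; simp [map_smul])
      (fun s a c => by ext m; simp [map_smul])
      (fun a c c' => by ext m; simp [map_smul])
      (fun s a c => by ext m; simp [map_smul]))
    (Coalgebra.comul (R := k) κ)

lemma adAct_add (aM : K →ₗ[k] Module.End k M) (ag : K →ₗ[k] Module.End k g)
    (κ : K) (η η' : M →ₗ[k] g) :
    adAct aM ag κ (η + η') = adAct aM ag κ η + adAct aM ag κ η' := by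
  unfold adAct
  ext m
  induction Coalgebra.comul (R := k) κ using TensorProduct.induction_on with
  | zero => simp
  | tmul a c => simp
  | add x y hx hy => simp only [map_add, LinearMap.add_apply] at *; rw [hx, hy]; abel

lemma adAct_smul (aM : K →ₗ[k] Module.End k M) (ag : K →ₗ[k] Module.End k g)
    (κ : K) (s : k) (η : M →ₗ[k] g) :
    adAct aM ag κ (s • η) = s • adAct aM ag κ η := by
  unfold adAct
  ext m
  induction Coalgebra.comul (R := k) κ using TensorProduct.induction_on with
  | zero => simp
  | tmul a c => simp [map_smul]
  | add x y hx hy =>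
      simp only [map_add, LinearMap.add_apply, LinearMap.smul_apply, smul_add] at *
      rw [hx, hy]

/-- `κ ↦ [κ₍₁₎ ▷ u, κ₍₂₎ ▷ v]`, used to state `K`-equivariance of a bracket -/
def brAct (ag : K →ₗ[k] Module.End k g) (br : g →ₗ[k] g →ₗ[k] g)
    (u v : g) : K ⊗[k] K →ₗ[k] g :=
  TensorProduct.lift
    (LinearMap.mk₂ k (fun a c => br (ag a u) (ag c v))
      (fun a a' c => by simp [map_smul])
      (fun s a c => by simp [map_smul])
      (fun a c c' => by simp [map_smul])
      (fun s a c => by simp [map_smul]))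

/-- `κ ↦ (κ₍₁₎ ▷ b)(κ₍₂₎ ▷ b')`, used to state that an algebra is a
`K`-module algebra -/
def mulAct {B : Type*} [Ring B] [Algebra k B] (aB : K →ₗ[k] Module.End k B)
    (b b' : B) : K ⊗[k] K →ₗ[k] B :=
  TensorProduct.lift
    (LinearMap.mk₂ k (fun x y => aB x b * aB y b')
      (fun a a' c => by simp [map_smul, add_mul, smul_mul_assoc])
      (fun s a c => by simp [map_smul, smul_mul_assoc])
      (fun a c c' => by simp [map_smul, mul_add, mul_smul_comm])
      (fun s a c => by simp [map_smul, mul_smul_comm]))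

section AtiyahData

variable {ι B T P : Type*} [Fintype ι]
variable [Ring B] [Algebra k B] [AddCommGroup T] [Module k T] [AddCommGroup P] [Module k P]

/-- the right `B`-module structure `X·b := Σ_i (r2 i ▷ b)(r1 i ▷ X)` -/
def rMod (r1 r2 : ι → K) (aB : K →ₗ[k] Module.End k B)
    (lT : B →ₗ[k] Module.End k T) (aT : K →ₗ[k] Module.End k T)
    (X : T) (b : B) : T :=
  ∑ i, lT (aB (r2 i) b) (aT (r1 i) X)

/-- `(δ_Y ρ)(X) := [Y, ρ(X)] − Σ_i (r2 i ▷ ρ)([r1 i ▷ Y^π, X])` -/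
def delta (r1 r2 : ι → K)
    (aT : K →ₗ[k] Module.End k T) (aP : K →ₗ[k] Module.End k P)
    (brT : T →ₗ[k] T →ₗ[k] T) (brP : P →ₗ[k] P →ₗ[k] P) (π : P →ₗ[k] T)
    (Y : P) (ρ : T →ₗ[k] P) : T →ₗ[k] P :=
  (brP Y) ∘ₗ ρ - ∑ i, (adAct aT aP (r2 i) ρ) ∘ₗ (brT (aT (r1 i) (π Y)))

lemma delta_addY (r1 r2 : ι → K)
    (aT : K →ₗ[k] Module.End k T) (aP : K →ₗ[k] Module.End k P)
    (brT : T →ₗ[k] T →ₗ[k] T) (brP : P →ₗ[k] P →ₗ[k] P) (π : P →ₗ[k] T)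
    (Y Y' : P) (ρ : T →ₗ[k] P) :
    delta r1 r2 aT aP brT brP π (Y + Y') ρ
      = delta r1 r2 aT aP brT brP π Y ρ + delta r1 r2 aT aP brT brP π Y' ρ := by
  unfold delta
  ext x
  simp [map_add, Finset.sum_add_distrib]
  abel

lemma delta_smulY (r1 r2 : ι → K)
    (aT : K →ₗ[k] Module.End k T) (aP : K →ₗ[k] Module.End k P)
    (brT : T →ₗ[k] T →ₗ[k] T) (brP : P →ₗ[k] P →ₗ[k] P) (π : P →ₗ[k] T)
    (s : k) (Y : P) (ρ : T →ₗ[k] P) :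
    delta r1 r2 aT aP brT brP π (s • Y) ρ = s • delta r1 r2 aT aP brT brP π Y ρ := by
  unfold delta
  ext x
  simp [map_smul, smul_sub, Finset.smul_sum]

lemma delta_addRho (r1 r2 : ι → K)
    (aT : K →ₗ[k] Module.End k T) (aP : K →ₗ[k] Module.End k P)
    (brT : T →ₗ[k] T →ₗ[k] T) (brP : P →ₗ[k] P →ₗ[k] P) (π : P →ₗ[k] T)
    (Y : P) (ρ ρ' : T →ₗ[k] P) :
    delta r1 r2 aT aP brT brP π Y (ρ + ρ')
      = delta r1 r2 aT aP brT brP π Y ρ + delta r1 r2 aT aP brT brP π Y ρ' := by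
  unfold delta
  ext x
  simp [map_add, adAct_add, Finset.sum_add_distrib]
  abel

lemma delta_smulRho (r1 r2 : ι → K)
    (aT : K →ₗ[k] Module.End k T) (aP : K →ₗ[k] Module.End k P)
    (brT : T →ₗ[k] T →ₗ[k] T) (brP : P →ₗ[k] P →ₗ[k] P) (π : P →ₗ[k] T)
    (s : k) (Y : P) (ρ : T →ₗ[k] P) :
    delta r1 r2 aT aP brT brP π Y (s • ρ) = s • delta r1 r2 aT aP brT brP π Y ρ := by
  unfold delta
  ext x
  simp [map_smul, adAct_smul, smul_sub, Finset.smul_sum]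

/-- `κ ↦ δ_{κ₍₁₎ ▷ Y}(κ₍₂₎ ▷ ρ)`, used to state the `K`-equivariance of `δ` -/
def deltaAct (r1 r2 : ι → K)
    (aT : K →ₗ[k] Module.End k T) (aP : K →ₗ[k] Module.End k P)
    (brT : T →ₗ[k] T →ₗ[k] T) (brP : P →ₗ[k] P →ₗ[k] P) (π : P →ₗ[k] T)
    (Y : P) (ρ : T →ₗ[k] P) : K ⊗[k] K →ₗ[k] (T →ₗ[k] P) :=
  TensorProduct.lift
    (LinearMap.mk₂ k
      (fun a c => delta r1 r2 aT aP brT brP π (aP a Y) (adAct aT aP c ρ))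
      (fun a a' c => by simp [map_add, delta_addY])
      (fun s a c => by simp [map_smul, delta_smulY])
      (fun a c c' => by
        have : adAct aT aP (c + c') ρ = adAct aT aP c ρ + adAct aT aP c' ρ := by
          simp [adAct, map_add]
        simp [this, delta_addRho])
      (fun s a c => by
        have : adAct aT aP (s • c) ρ = s • adAct aT aP c ρ := by
          simp [adAct, map_smul]
        simp [this, delta_smulRho]))

end AtiyahData

/-!
For (i), write `δ_Y ρ = [Y, -] ∘ ρ - Σ (R_α ▷ ρ) ∘ [R^α ▷ Y^π, -]`. The adjoint action is
compatible with composition and turns `[Y, -]` into `[κ ▷ Y, -]`, so `κ ▷ δ_Y ρ` differs from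
`δ_{κ₍₁₎▷Y}(κ₍₂₎▷ρ)` only in that `R` and `Δκ` are multiplied in the opposite order;
quasi-cocommutativity `Δ^op(κ) R = R Δ(κ)` identifies the two.

For (ii), evaluate at `X ∈ T`. The Jacobi identities, the hexagon axioms and (i) expand each of
`δ_{[Y,Y']} ρ`, `δ_Y δ_{Y'} ρ` and `Σ δ_{R_α▷Y'} δ_{R^α▷Y} ρ` into four sums; in the last one
triangularity `R₂₁ R = 1` collapses two of them. Everything cancels except one triple sum on each
side, and these two agree by the quantum Yang–Baxter equation for `R₂₁`.
-/

section Adjoint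

open Coalgebra

local notation "𝒮" => HopfAlgebra.antipode k (A := K)

variable {U V W : Type*} [AddCommGroup U] [Module k U] [AddCommGroup V] [Module k V]
  [AddCommGroup W] [Module k W]

lemma adAct_sub (aV : K →ₗ[k] Module.End k V) (aW : K →ₗ[k] Module.End k W) (κ : K)
    (η η' : V →ₗ[k] W) : adAct aV aW κ (η - η') = adAct aV aW κ η - adAct aV aW κ η' :=
  map_sub (AddMonoidHom.mk' _ (adAct_add aV aW κ)) η η'

lemma adAct_sum (aV : K →ₗ[k] Module.End k V) (aW : K →ₗ[k] Module.End k W) {J : Type*}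
    (s : Finset J) (κ : K) (η : J → V →ₗ[k] W) :
    adAct aV aW κ (∑ j ∈ s, η j) = ∑ j ∈ s, adAct aV aW κ (η j) :=
  map_sum (AddMonoidHom.mk' _ (adAct_add aV aW κ)) η s

lemma adAct_eq_sum (aV : K →ₗ[k] Module.End k V) (aW : K →ₗ[k] Module.End k W) {κ : K}
    {J : Type*} (r : Repr k κ J) (η : V →ₗ[k] W) :
    adAct aV aW κ η = ∑ i ∈ r.index, aW (r.left i) ∘ₗ η ∘ₗ aV (𝒮 (r.right i)) := by
  simp [adAct, ← r.eq]

def adActₗ (aV : K →ₗ[k] Module.End k V) (aW : K →ₗ[k] Module.End k W) (η : V →ₗ[k] W) :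
    K →ₗ[k] V →ₗ[k] W where
  toFun κ := adAct aV aW κ η
  map_add' x y := by simp [adAct]
  map_smul' s x := by simp [adAct]

@[simp] lemma adActₗ_apply (aV : K →ₗ[k] Module.End k V) (aW : K →ₗ[k] Module.End k W)
    (η : V →ₗ[k] W) (κ : K) : adActₗ aV aW η κ = adAct aV aW κ η := rfl

lemma adAct_mul (aV : K →ₗ[k] Module.End k V) (aW : K →ₗ[k] Module.End k W)
    (haVm : ∀ x y : K, aV (x * y) = aV x * aV y) (haWm : ∀ x y : K, aW (x * y) = aW x * aW y)
    (x y : K) (η : V →ₗ[k] W) :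
    adAct aV aW (x * y) η = adAct aV aW x (adAct aV aW y η) := by
  ext v
  simp [adAct_eq_sum aV aW ((ℛ k x).mul (ℛ k y)), adAct_eq_sum aV aW (ℛ k x),
    adAct_eq_sum aV aW (ℛ k y), Finset.sum_product, HopfAlgebra.antipode_mul_antidistrib,
    haVm, haWm]

lemma brAct_comul_eq_sum (aV : K →ₗ[k] Module.End k V) (br : V →ₗ[k] V →ₗ[k] V) (u v : V)
    {κ : K} {J : Type*} (r : Repr k κ J) :
    brAct aV br u v (comul κ) = ∑ i ∈ r.index, br (aV (r.left i) u) (aV (r.right i) v) := by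
  simp [brAct, ← r.eq]

lemma sum_counit_right_smul {κ : K} {J : Type*} (r : Repr k κ J) :
    ∑ i ∈ r.index, counit (R := k) (r.right i) • r.left i = κ := by
  simpa only [map_sum, TensorProduct.lift.tmul, LinearMap.flip_apply, LinearMap.lsmul_apply,
    one_smul] using congr(TensorProduct.lift (LinearMap.lsmul k K).flip $(sum_tmul_counit_eq r))

lemma sum_adAct_apply_act (aV : K →ₗ[k] Module.End k V) (aW : K →ₗ[k] Module.End k W)
    (haV1 : aV 1 = 1) (haVm : ∀ x y : K, aV (x * y) = aV x * aV y)
    {κ : K} {J : Type*} (r : Repr k κ J) (η : V →ₗ[k] W) (v : V) :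
    ∑ i ∈ r.index, adAct aV aW (r.left i) η (aV (r.right i) v) = aW κ (η v) := by
  have coassoc := congr((TensorProduct.lift aW ∘ₗ
      LinearMap.lTensor K (η ∘ₗ aV.flip v ∘ₗ LinearMap.mul' k K ∘ₗ map 𝒮 LinearMap.id))
    $(sum_tmul_tmul_eq r (fun i ↦ ℛ k (r.left i)) (fun i ↦ ℛ k (r.right i))))
  simp only [map_sum, LinearMap.coe_comp, Function.comp_apply, LinearMap.lTensor_tmul,
    map_tmul, LinearMap.mul'_apply, LinearMap.id_coe, id_eq, TensorProduct.lift.tmul,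
    LinearMap.flip_apply] at coassoc
  calc ∑ i ∈ r.index, adAct aV aW (r.left i) η (aV (r.right i) v)
      = ∑ i ∈ r.index, ∑ j ∈ (ℛ k (r.left i)).index, aW ((ℛ k (r.left i)).left j)
          (η (aV (𝒮 ((ℛ k (r.left i)).right j) * r.right i) v)) := by
        refine Finset.sum_congr rfl fun i _ ↦ ?_
        simp [adAct_eq_sum aV aW (ℛ k (r.left i)), haVm]
    _ = ∑ i ∈ r.index, aW (r.left i) (η (aV (∑ j ∈ (ℛ k (r.right i)).index,
          𝒮 ((ℛ k (r.right i)).left j) * (ℛ k (r.right i)).right j) v)) := by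
        simp [coassoc, map_sum]
    _ = aW κ (η v) := by
        conv_rhs => rw [← sum_counit_right_smul r]
        simp [HopfAlgebra.sum_antipode_mul_eq_smul, haV1, LinearMap.sum_apply, map_sum]

lemma adAct_comp (aU : K →ₗ[k] Module.End k U) (aV : K →ₗ[k] Module.End k V)
    (aW : K →ₗ[k] Module.End k W) (haV1 : aV 1 = 1)
    (haVm : ∀ x y : K, aV (x * y) = aV x * aV y)
    {κ : K} {J : Type*} (r : Repr k κ J) (f : V →ₗ[k] W) (g : U →ₗ[k] V) :
    adAct aU aW κ (f ∘ₗ g)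
      = ∑ i ∈ r.index, adAct aV aW (r.left i) f ∘ₗ adAct aU aV (r.right i) g := by
  ext u
  have coassoc := congr((TensorProduct.lift ((adActₗ aV aW f).compl₂
      (TensorProduct.lift (aV.compl₂ (g ∘ₗ aU.flip u ∘ₗ 𝒮)))))
    $(sum_tmul_tmul_eq r (fun i ↦ ℛ k (r.left i)) (fun i ↦ ℛ k (r.right i))))
  simp only [map_sum, TensorProduct.lift.tmul, LinearMap.compl₂_apply, LinearMap.coe_comp,
    Function.comp_apply, LinearMap.flip_apply, adActₗ_apply] at coassoc
  calc adAct aU aW κ (f ∘ₗ g) u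
      = ∑ i ∈ r.index, ∑ j ∈ (ℛ k (r.left i)).index, adAct aV aW ((ℛ k (r.left i)).left j) f
          (aV ((ℛ k (r.left i)).right j) (g (aU (𝒮 (r.right i)) u))) := by
        simp [adAct_eq_sum aU aW r, sum_adAct_apply_act aV aW haV1 haVm]
    _ = _ := by
        simp [coassoc, adAct_eq_sum aU aV (ℛ k (r.right _))]

lemma adAct_bracket (aV : K →ₗ[k] Module.End k V) (haV1 : aV 1 = 1)
    (haVm : ∀ x y : K, aV (x * y) = aV x * aV y) (br : V →ₗ[k] V →ₗ[k] V)
    (hequiv : ∀ (κ : K) (u v : V), aV κ (br u v) = brAct aV br u v (comul κ))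
    (κ : K) (u : V) :
    adAct aV aV κ (br u) = br (aV κ u) := by
  ext v
  set r := ℛ k κ
  have coassoc := congr((TensorProduct.lift ((br ∘ₗ aV.flip u).compl₂
      (aV.flip v ∘ₗ LinearMap.mul' k K ∘ₗ map LinearMap.id 𝒮)))
    $(sum_tmul_tmul_eq r (fun i ↦ ℛ k (r.left i)) (fun i ↦ ℛ k (r.right i))))
  simp only [map_sum, TensorProduct.lift.tmul, LinearMap.compl₂_apply, LinearMap.coe_comp,
    Function.comp_apply, LinearMap.flip_apply, map_tmul, LinearMap.mul'_apply, LinearMap.id_coe,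
    id_eq] at coassoc
  calc adAct aV aV κ (br u) v
      = ∑ i ∈ r.index, ∑ j ∈ (ℛ k (r.left i)).index, br (aV ((ℛ k (r.left i)).left j) u)
          (aV ((ℛ k (r.left i)).right j * 𝒮 (r.right i)) v) := by
        simp [r, adAct_eq_sum aV aV (ℛ k κ), hequiv, brAct_comul_eq_sum aV br _ _ (ℛ k _), haVm]
    _ = ∑ i ∈ r.index, counit (R := k) (r.right i) • br (aV (r.left i) u) v := by
        refine coassoc.trans (Finset.sum_congr rfl fun i _ ↦ ?_)
        rw [← map_sum, ← LinearMap.sum_apply, ← map_sum, HopfAlgebra.sum_mul_antipode_eq_smul]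
        simp [haV1]
    _ = br (aV κ u) v := by
        conv_rhs => rw [← sum_counit_right_smul r]
        simp [map_sum, LinearMap.sum_apply]

end Adjoint

section RMatrix

open Coalgebra

variable {ι : Type*} [Fintype ι] (r1 r2 : ι → K)

variable (k) in
def QuasiCocomm : Prop :=
  ∀ x : K, TensorProduct.comm k K K (comul x) * (∑ i, r1 i ⊗ₜ[k] r2 i)
    = (∑ i, r1 i ⊗ₜ[k] r2 i) * comul x

variable (k) in
def Hexagon₁ : Prop :=
  (∑ i, TensorProduct.assoc k K K K (comul (r1 i) ⊗ₜ[k] r2 i))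
    = (∑ i, r1 i ⊗ₜ[k] ((1 : K) ⊗ₜ[k] r2 i)) * (∑ i, (1 : K) ⊗ₜ[k] (r1 i ⊗ₜ[k] r2 i))

variable (k) in
def Hexagon₂ : Prop :=
  (∑ i, r1 i ⊗ₜ[k] comul (r2 i))
    = (∑ i, r1 i ⊗ₜ[k] ((1 : K) ⊗ₜ[k] r2 i)) * (∑ i, r1 i ⊗ₜ[k] (r2 i ⊗ₜ[k] (1 : K)))

lemma sum_sum_R21_mul_R {V : Type*} [AddCommGroup V] [Module k V]
    (htri₂ : (∑ i, r2 i ⊗ₜ[k] r1 i) * (∑ i, r1 i ⊗ₜ[k] r2 i) = 1) (Φ : K →ₗ[k] K →ₗ[k] V) :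
    ∑ p, ∑ m, Φ (r2 p * r1 m) (r1 p * r2 m) = Φ 1 1 := by
  simpa [Finset.sum_mul_sum, Algebra.TensorProduct.one_def]
    using congr(TensorProduct.lift Φ $htri₂)

lemma comul_mul_R21 (hqc : QuasiCocomm k r1 r2) (x : K) :
    comul x * (∑ i, r2 i ⊗ₜ[k] r1 i)
      = (∑ i, r2 i ⊗ₜ[k] r1 i) * TensorProduct.comm k K K (comul x) := by
  have hcomm : ∀ t, Algebra.TensorProduct.comm k K K t = TensorProduct.comm k K K t :=
    fun _ ↦ rfl
  have h := congr(Algebra.TensorProduct.comm k K K $(hqc x))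
  simp only [map_mul, map_sum, Algebra.TensorProduct.comm_tmul] at h
  simpa only [hcomm, TensorProduct.comm_comm] using h

-- `R₂₁ R₃₁ R₃₂ = R₃₂ R₃₁ R₂₁`, the quantum Yang–Baxter equation for `R₂₁`.
lemma yang_baxter (hqc : QuasiCocomm k r1 r2) (hhex₂ : Hexagon₂ k r1 r2) :
    (∑ m, ∑ i, ∑ j, (r2 j * r2 i) ⊗ₜ[k] ((r1 j * r2 m) ⊗ₜ[k] (r1 i * r1 m)))
      = ∑ j, ∑ i, ∑ m, (r2 i * r2 j) ⊗ₜ[k] ((r2 m * r1 j) ⊗ₜ[k] (r1 m * r1 i)) := by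
  have hcomm : ∀ t, Algebra.TensorProduct.comm k K K t = TensorProduct.comm k K K t :=
    fun _ ↦ rfl
  have hex : ∑ i, comul (r2 i) ⊗ₜ[k] r1 i
      = (∑ m, ((1 : K) ⊗ₜ[k] r2 m) ⊗ₜ[k] r1 m) * (∑ i, (r2 i ⊗ₜ[k] (1 : K)) ⊗ₜ[k] r1 i) := by
    simpa only [map_mul, map_sum, Algebra.TensorProduct.comm_tmul]
      using congr(Algebra.TensorProduct.comm k K (K ⊗[k] K) $hhex₂)
  have hex_op : ∑ i, TensorProduct.comm k K K (comul (r2 i)) ⊗ₜ[k] r1 i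
      = (∑ i, (r2 i ⊗ₜ[k] (1 : K)) ⊗ₜ[k] r1 i) * (∑ m, ((1 : K) ⊗ₜ[k] r2 m) ⊗ₜ[k] r1 m) := by
    simpa only [map_mul, map_sum, Algebra.TensorProduct.congr_apply,
      Algebra.TensorProduct.map_tmul, Algebra.TensorProduct.comm_tmul, AlgEquiv.coe_refl,
      AlgHom.coe_coe, AlgEquiv.coe_toAlgHom, id_eq, hcomm, TensorProduct.comm_tmul]
      using congr(Algebra.TensorProduct.congr (Algebra.TensorProduct.comm k K K)
        (AlgEquiv.refl (A₁ := K) (R := k)) $hex)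
  have chain : ((∑ j, r2 j ⊗ₜ[k] r1 j) ⊗ₜ[k] (1 : K)) *
        ((∑ i, (r2 i ⊗ₜ[k] (1 : K)) ⊗ₜ[k] r1 i) * (∑ m, ((1 : K) ⊗ₜ[k] r2 m) ⊗ₜ[k] r1 m))
      = ((∑ m, ((1 : K) ⊗ₜ[k] r2 m) ⊗ₜ[k] r1 m) * (∑ i, (r2 i ⊗ₜ[k] (1 : K)) ⊗ₜ[k] r1 i)) *
          ((∑ j, r2 j ⊗ₜ[k] r1 j) ⊗ₜ[k] (1 : K)) := by
    rw [← hex_op, ← hex, Finset.mul_sum, Finset.sum_mul]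
    refine Finset.sum_congr rfl fun i _ ↦ ?_
    rw [Algebra.TensorProduct.tmul_mul_tmul, Algebra.TensorProduct.tmul_mul_tmul,
      one_mul, mul_one, comul_mul_R21 r1 r2 hqc]
  simp only [TensorProduct.sum_tmul, Finset.sum_mul, Finset.mul_sum,
    Algebra.TensorProduct.tmul_mul_tmul, one_mul, mul_one] at chain
  simpa only [map_sum, Algebra.TensorProduct.assoc_tmul]
    using congr(Algebra.TensorProduct.assoc k k k K K K $chain)

end RMatrix

section Delta

open Coalgebra

variable {ι T P : Type*} [Fintype ι] [AddCommGroup T] [Module k T] [AddCommGroup P] [Module k P]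
variable (r1 r2 : ι → K) (aT : K →ₗ[k] Module.End k T) (aP : K →ₗ[k] Module.End k P)
  (brT : T →ₗ[k] T →ₗ[k] T) (brP : P →ₗ[k] P →ₗ[k] P) (π : P →ₗ[k] T)

lemma delta_apply (Y : P) (ρ : T →ₗ[k] P) (X : T) :
    delta r1 r2 aT aP brT brP π Y ρ X
      = brP Y (ρ X) - ∑ i, adAct aT aP (r2 i) ρ (brT (aT (r1 i) (π Y)) X) := by
  simp [delta]

lemma deltaAct_tmul (Y : P) (ρ : T →ₗ[k] P) (a c : K) :
    deltaAct r1 r2 aT aP brT brP π Y ρ (a ⊗ₜ c)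
      = delta r1 r2 aT aP brT brP π (aP a Y) (adAct aT aP c ρ) := by
  simp [deltaAct]

lemma deltaAct_comul_eq_sum (Y : P) (ρ : T →ₗ[k] P) {κ : K} {J : Type*} (r : Repr k κ J) :
    deltaAct r1 r2 aT aP brT brP π Y ρ (comul κ)
      = ∑ i ∈ r.index,
          delta r1 r2 aT aP brT brP π (aP (r.left i) Y) (adAct aT aP (r.right i) ρ) := by
  simp [deltaAct, ← r.eq]

lemma adAct_delta (hqc : QuasiCocomm k r1 r2)
    (haT1 : aT 1 = 1) (haTm : ∀ x y : K, aT (x * y) = aT x * aT y)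
    (haP1 : aP 1 = 1) (haPm : ∀ x y : K, aP (x * y) = aP x * aP y)
    (hTequiv : ∀ (κ : K) (u v : T), aT κ (brT u v) = brAct aT brT u v (comul κ))
    (hPequiv : ∀ (κ : K) (u v : P), aP κ (brP u v) = brAct aP brP u v (comul κ))
    (hπequiv : ∀ (κ : K) (Y : P), π (aP κ Y) = aT κ (π Y))
    (κ : K) (Y : P) (ρ : T →ₗ[k] P) :
    adAct aT aP κ (delta r1 r2 aT aP brT brP π Y ρ)
      = deltaAct r1 r2 aT aP brT brP π Y ρ (comul κ) := by
  set r := ℛ k κ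
  have hqc' := congr(TensorProduct.lift ((LinearMap.llcomp k T T P ∘ₗ adActₗ aT aP ρ).flip ∘ₗ
      brT ∘ₗ aT.flip (π Y)) $(hqc κ))
  simp only [← r.eq, map_sum, TensorProduct.comm_tmul, Finset.sum_mul_sum,
    Algebra.TensorProduct.tmul_mul_tmul, TensorProduct.lift.tmul, LinearMap.coe_comp,
    Function.comp_apply, LinearMap.flip_apply, LinearMap.llcomp_apply', adActₗ_apply] at hqc'
  rw [deltaAct_comul_eq_sum (r := r), delta, adAct_sub, adAct_sum,
    adAct_comp aT aP aP haP1 haPm r,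
    Finset.sum_congr rfl fun n _ ↦ adAct_comp aT aT aP haT1 haTm r _ _]
  simp only [delta, Finset.sum_sub_distrib, adAct_bracket aP haP1 haPm brP hPequiv,
    adAct_bracket aT haT1 haTm brT hTequiv, ← adAct_mul aT aP haTm haPm, hπequiv,
    ← Module.End.mul_apply, ← haTm]
  rw [Finset.sum_comm, hqc', Finset.sum_comm]

lemma delta_aP_adAct_apply (haTm : ∀ x y : K, aT (x * y) = aT x * aT y)
    (haPm : ∀ x y : K, aP (x * y) = aP x * aP y)
    (hπequiv : ∀ (κ : K) (Y : P), π (aP κ Y) = aT κ (π Y))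
    (c c' : K) (Y : P) (ρ : T →ₗ[k] P) (X : T) :
    delta r1 r2 aT aP brT brP π (aP c Y) (adAct aT aP c' ρ) X
      = brP (aP c Y) (adAct aT aP c' ρ X)
        - ∑ l, adAct aT aP (r2 l * c') ρ (brT (aT (r1 l * c) (π Y)) X) := by
  simp [delta_apply, hπequiv, adAct_mul aT aP haTm haPm, haTm]

lemma sum_adAct_bracket_apply (hhex₁ : Hexagon₁ k r1 r2)
    (hTequiv : ∀ (κ : K) (u v : T), aT κ (brT u v) = brAct aT brT u v (comul κ))
    (ρ : T →ₗ[k] P) (u v X : T) :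
    ∑ i, adAct aT aP (r2 i) ρ (brT (aT (r1 i) (brT u v)) X)
      = ∑ i, ∑ j, adAct aT aP (r2 i * r2 j) ρ (brT (brT (aT (r1 i) u) (aT (r1 j) v)) X) := by
  have hex := congr(TensorProduct.lift (TensorProduct.uncurry (RingHom.id k) K K P ∘ₗ
      (((brT ∘ₗ aT.flip u).compl₂ (aT.flip v)).compr₂ (brT.flip X)).compr₂
        (LinearMap.lcomp k P (adActₗ aT aP ρ) ∘ₗ LinearMap.applyₗ)) $hhex₁)
  simp only [← fun i ↦ (ℛ k (r1 i)).eq, TensorProduct.sum_tmul, map_sum, Finset.sum_mul_sum,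
    Algebra.TensorProduct.tmul_mul_tmul, one_mul, mul_one, TensorProduct.assoc_tmul,
    TensorProduct.lift.tmul, LinearMap.coe_comp, Function.comp_apply,
    TensorProduct.uncurry_apply, LinearMap.compr₂_apply, LinearMap.compl₂_apply,
    LinearMap.flip_apply, LinearMap.lcomp_apply, LinearMap.applyₗ_apply_apply,
    adActₗ_apply] at hex
  simp only [hTequiv, brAct_comul_eq_sum aT brT u v (ℛ k _), map_sum, LinearMap.sum_apply, ← hex]

lemma sum_adAct_delta_apply (hhex₂ : Hexagon₂ k r1 r2)
    (hδ : ∀ (κ : K) (Y : P) (ρ : T →ₗ[k] P), adAct aT aP κ (delta r1 r2 aT aP brT brP π Y ρ)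
      = deltaAct r1 r2 aT aP brT brP π Y ρ (comul κ))
    (W : P) (σ : T →ₗ[k] P) (Z X : T) :
    ∑ i, adAct aT aP (r2 i) (delta r1 r2 aT aP brT brP π W σ) (brT (aT (r1 i) Z) X)
      = ∑ i, ∑ j, delta r1 r2 aT aP brT brP π (aP (r2 j) W) (adAct aT aP (r2 i) σ)
          (brT (aT (r1 i * r1 j) Z) X) := by
  have hex := congr(TensorProduct.lift ((LinearMap.applyₗ ∘ₗ brT.flip X ∘ₗ aT.flip Z).compl₂
      (deltaAct r1 r2 aT aP brT brP π W σ)) $hhex₂)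
  simp only [map_sum, Finset.sum_mul_sum, Algebra.TensorProduct.tmul_mul_tmul, one_mul, mul_one,
    TensorProduct.lift.tmul, LinearMap.compl₂_apply, LinearMap.coe_comp, Function.comp_apply,
    LinearMap.flip_apply, LinearMap.applyₗ_apply_apply, deltaAct_tmul] at hex
  simp only [hδ, hex]

lemma sum_sum_adAct_delta_aP_apply (hhex₂ : Hexagon₂ k r1 r2)
    (htri₂ : (∑ i, r2 i ⊗ₜ[k] r1 i) * (∑ i, r1 i ⊗ₜ[k] r2 i) = 1)
    (haTm : ∀ x y : K, aT (x * y) = aT x * aT y)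
    (haP1 : aP 1 = 1) (haPm : ∀ x y : K, aP (x * y) = aP x * aP y)
    (hδ : ∀ (κ : K) (Y : P) (ρ : T →ₗ[k] P), adAct aT aP κ (delta r1 r2 aT aP brT brP π Y ρ)
      = deltaAct r1 r2 aT aP brT brP π Y ρ (comul κ))
    (Y : P) (ρ : T →ₗ[k] P) (Z X : T) :
    ∑ m, ∑ n, adAct aT aP (r2 n) (delta r1 r2 aT aP brT brP π (aP (r1 m) Y) ρ)
        (brT (aT (r1 n) (aT (r2 m) Z)) X)
      = ∑ n, delta r1 r2 aT aP brT brP π Y (adAct aT aP (r2 n) ρ) (brT (aT (r1 n) Z) X) := by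
  let deltaₗ (σ : T →ₗ[k] P) : K →ₗ[k] T →ₗ[k] P :=
    { toFun := fun a ↦ delta r1 r2 aT aP brT brP π (aP a Y) σ
      map_add' := by simp [delta_addY]
      map_smul' := by simp [delta_smulY] }
  have tri := fun n ↦ sum_sum_R21_mul_R r1 r2 htri₂ ((deltaₗ (adAct aT aP (r2 n) ρ)).compl₂
    (brT.flip X ∘ₗ aT.flip Z ∘ₗ LinearMap.mulLeft k (r1 n)))
  simp only [LinearMap.compl₂_apply, LinearMap.coe_comp, Function.comp_apply,
    LinearMap.mulLeft_apply, LinearMap.flip_apply, mul_one, LinearMap.coe_mk, AddHom.coe_mk,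
    deltaₗ, haP1, Module.End.one_apply] at tri
  simp only [sum_adAct_delta_apply r1 r2 aT aP brT brP π hhex₂ hδ, ← tri]
  rw [Finset.sum_comm]
  refine Finset.sum_congr rfl fun n _ ↦ ?_
  rw [Finset.sum_comm]
  simp [haPm, haTm]

lemma delta_bracket_apply (hhex₁ : Hexagon₁ k r1 r2)
    (haTm : ∀ x y : K, aT (x * y) = aT x * aT y)
    (hTequiv : ∀ (κ : K) (u v : T), aT κ (brT u v) = brAct aT brT u v (comul κ))
    (hTjac : ∀ u v w : T,
      brT u (brT v w) = brT (brT u v) w + ∑ i, brT (aT (r2 i) v) (brT (aT (r1 i) u) w))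
    (hPjac : ∀ u v w : P,
      brP u (brP v w) = brP (brP u v) w + ∑ i, brP (aP (r2 i) v) (brP (aP (r1 i) u) w))
    (hπbr : ∀ Y Y' : P, π (brP Y Y') = brT (π Y) (π Y'))
    (Y Y' : P) (ρ : T →ₗ[k] P) (X : T) :
    delta r1 r2 aT aP brT brP π (brP Y Y') ρ X
      = brP Y (brP Y' (ρ X)) - ∑ m, brP (aP (r2 m) Y') (brP (aP (r1 m) Y) (ρ X))
        - ∑ i, ∑ j, adAct aT aP (r2 i * r2 j) ρ
            (brT (aT (r1 i) (π Y)) (brT (aT (r1 j) (π Y')) X))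
        + ∑ i, ∑ j, ∑ m, adAct aT aP (r2 i * r2 j) ρ
            (brT (aT (r2 m * r1 j) (π Y')) (brT (aT (r1 m * r1 i) (π Y)) X)) := by
  have jacP := eq_sub_of_add_eq (hPjac Y Y' (ρ X)).symm
  have jacT := fun u v ↦ eq_sub_of_add_eq (hTjac u v X).symm
  rw [delta_apply, hπbr, jacP, sum_adAct_bracket_apply r1 r2 aT aP brT hhex₁ hTequiv]
  simp only [jacT, map_sub, map_sum, Finset.sum_sub_distrib, haTm, Module.End.mul_apply]
  abel

lemma delta_delta_apply (hhex₂ : Hexagon₂ k r1 r2)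
    (haTm : ∀ x y : K, aT (x * y) = aT x * aT y) (haPm : ∀ x y : K, aP (x * y) = aP x * aP y)
    (hπequiv : ∀ (κ : K) (Y : P), π (aP κ Y) = aT κ (π Y))
    (hδ : ∀ (κ : K) (Y : P) (ρ : T →ₗ[k] P), adAct aT aP κ (delta r1 r2 aT aP brT brP π Y ρ)
      = deltaAct r1 r2 aT aP brT brP π Y ρ (comul κ))
    (Y Y' : P) (ρ : T →ₗ[k] P) (X : T) :
    delta r1 r2 aT aP brT brP π Y (delta r1 r2 aT aP brT brP π Y' ρ) X
      = brP Y (brP Y' (ρ X)) - ∑ j, brP Y (adAct aT aP (r2 j) ρ (brT (aT (r1 j) (π Y')) X))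
        - ∑ i, ∑ j, brP (aP (r2 j) Y')
            (adAct aT aP (r2 i) ρ (brT (aT (r1 i * r1 j) (π Y)) X))
        + ∑ i, ∑ j, ∑ l, adAct aT aP (r2 l * r2 i) ρ
            (brT (aT (r1 l * r2 j) (π Y')) (brT (aT (r1 i * r1 j) (π Y)) X)) := by
  rw [delta_apply (Y := Y), delta_apply (Y := Y'),
    sum_adAct_delta_apply r1 r2 aT aP brT brP π hhex₂ hδ]
  simp only [delta_aP_adAct_apply r1 r2 aT aP brT brP π haTm haPm hπequiv, map_sub, map_sum,
    Finset.sum_sub_distrib]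
  abel

lemma sum_delta_delta_apply (hhex₂ : Hexagon₂ k r1 r2)
    (htri₂ : (∑ i, r2 i ⊗ₜ[k] r1 i) * (∑ i, r1 i ⊗ₜ[k] r2 i) = 1)
    (haTm : ∀ x y : K, aT (x * y) = aT x * aT y)
    (haP1 : aP 1 = 1) (haPm : ∀ x y : K, aP (x * y) = aP x * aP y)
    (hπequiv : ∀ (κ : K) (Y : P), π (aP κ Y) = aT κ (π Y))
    (hδ : ∀ (κ : K) (Y : P) (ρ : T →ₗ[k] P), adAct aT aP κ (delta r1 r2 aT aP brT brP π Y ρ)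
      = deltaAct r1 r2 aT aP brT brP π Y ρ (comul κ))
    (Y Y' : P) (ρ : T →ₗ[k] P) (X : T) :
    ∑ m, delta r1 r2 aT aP brT brP π (aP (r2 m) Y')
        (delta r1 r2 aT aP brT brP π (aP (r1 m) Y) ρ) X
      = ∑ m, brP (aP (r2 m) Y') (brP (aP (r1 m) Y) (ρ X))
        - ∑ i, ∑ j, brP (aP (r2 j) Y')
            (adAct aT aP (r2 i) ρ (brT (aT (r1 i * r1 j) (π Y)) X))
        - ∑ j, brP Y (adAct aT aP (r2 j) ρ (brT (aT (r1 j) (π Y')) X))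
        + ∑ i, ∑ j, adAct aT aP (r2 i * r2 j) ρ
            (brT (aT (r1 i) (π Y)) (brT (aT (r1 j) (π Y')) X)) := by
  rw [Finset.sum_comm (f := fun i j ↦
      brP (aP (r2 j) Y') (adAct aT aP (r2 i) ρ (brT (aT (r1 i * r1 j) (π Y)) X))),
    Finset.sum_comm (f := fun i j ↦
      adAct aT aP (r2 i * r2 j) ρ (brT (aT (r1 i) (π Y)) (brT (aT (r1 j) (π Y')) X)))]
  simp only [delta_apply, hπequiv, map_sub, map_sum, Finset.sum_sub_distrib]
  rw [sum_sum_adAct_delta_aP_apply r1 r2 aT aP brT brP π hhex₂ htri₂ haTm haP1 haPm hδ]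
  simp only [delta_apply, adAct_mul aT aP haTm haPm, haTm, Module.End.mul_apply,
    Finset.sum_sub_distrib]
  abel

lemma yang_baxter_apply (hqc : QuasiCocomm k r1 r2) (hhex₂ : Hexagon₂ k r1 r2)
    (ρ : T →ₗ[k] P) (u v X : T) :
    ∑ i, ∑ j, ∑ m, adAct aT aP (r2 i * r2 j) ρ
        (brT (aT (r2 m * r1 j) v) (brT (aT (r1 m * r1 i) u) X))
      = ∑ i, ∑ j, ∑ l, adAct aT aP (r2 l * r2 i) ρ
          (brT (aT (r1 l * r2 j) v) (brT (aT (r1 i * r1 j) u) X)) := by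
  have ybe := congr(TensorProduct.lift ((LinearMap.applyₗ ∘ₗ
      TensorProduct.lift ((brT ∘ₗ aT.flip v).compl₂ (brT.flip X ∘ₗ aT.flip u))).flip ∘ₗ
        adActₗ aT aP ρ) $(yang_baxter r1 r2 hqc hhex₂))
  simp only [map_sum, TensorProduct.lift.tmul, LinearMap.coe_comp, Function.comp_apply,
    LinearMap.flip_apply, LinearMap.applyₗ_apply_apply, LinearMap.compl₂_apply,
    adActₗ_apply] at ybe
  rw [Finset.sum_comm, ← ybe, Finset.sum_comm]

end Delta

theorem delta_is_braided_action
    {ι B T P : Type*} [Fintype ι]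
    [Ring B] [Algebra k B] [AddCommGroup T] [Module k T] [AddCommGroup P] [Module k P]
    -- the components of the `R`-matrix `R = Σ_i r1 i ⊗ r2 i = R^α ⊗ R_α`
    (r1 r2 : ι → K)
    -- triangular structure of `(K, R)`
    (hqc : ∀ x : K,
      (TensorProduct.comm k K K) (Coalgebra.comul (R := k) x) * (∑ i, r1 i ⊗ₜ[k] r2 i)
        = (∑ i, r1 i ⊗ₜ[k] r2 i) * Coalgebra.comul (R := k) x)
    (hhex₁ : (∑ i, (TensorProduct.assoc k K K K) ((Coalgebra.comul (R := k) (r1 i)) ⊗ₜ[k] r2 i))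
      = (∑ i, r1 i ⊗ₜ[k] ((1 : K) ⊗ₜ[k] r2 i)) * (∑ i, (1 : K) ⊗ₜ[k] (r1 i ⊗ₜ[k] r2 i)))
    (hhex₂ : (∑ i, r1 i ⊗ₜ[k] Coalgebra.comul (R := k) (r2 i))
      = (∑ i, r1 i ⊗ₜ[k] ((1 : K) ⊗ₜ[k] r2 i)) * (∑ i, r1 i ⊗ₜ[k] (r2 i ⊗ₜ[k] (1 : K))))
    (htri₂ : (∑ i, r2 i ⊗ₜ[k] r1 i) * (∑ i, r1 i ⊗ₜ[k] r2 i) = 1)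
    -- `K`-actions on `B`, `T`, `P`
    (aB : K →ₗ[k] Module.End k B)
    (aT : K →ₗ[k] Module.End k T)
    (haT1 : aT 1 = 1) (haTm : ∀ x y : K, aT (x * y) = aT x * aT y)
    (aP : K →ₗ[k] Module.End k P)
    (haP1 : aP 1 = 1) (haPm : ∀ x y : K, aP (x * y) = aP x * aP y)
    -- the braided Lie algebra structures of `T` and `P`
    (brT : T →ₗ[k] T →ₗ[k] T)
    (hTequiv : ∀ (κ : K) (u v : T),
      aT κ (brT u v) = brAct aT brT u v (Coalgebra.comul (R := k) κ))
    (hTjac : ∀ u v w : T,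
      brT u (brT v w) = brT (brT u v) w + ∑ i, brT (aT (r2 i) v) (brT (aT (r1 i) u) w))
    (brP : P →ₗ[k] P →ₗ[k] P)
    (hPequiv : ∀ (κ : K) (u v : P),
      aP κ (brP u v) = brAct aP brP u v (Coalgebra.comul (R := k) κ))
    (hPjac : ∀ u v w : P,
      brP u (brP v w) = brP (brP u v) w + ∑ i, brP (aP (r2 i) v) (brP (aP (r1 i) u) w))
    -- the `B`-bimodule structures (left actions; right actions via `rMod`)
    (lT : B →ₗ[k] Module.End k T)
    (lP : B →ₗ[k] Module.End k P)
    -- `π : P → T` is a `K`-equivariant, `B`-linear morphism of braided Lie algebras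
    (π : P →ₗ[k] T)
    (hπequiv : ∀ (κ : K) (Y : P), π (aP κ Y) = aT κ (π Y))
    (hπbr : ∀ Y Y' : P, π (brP Y Y') = brT (π Y) (π Y')) :
    -- the map `δ` is an action of the braided Lie algebra `P` on `Hom_B(T,P)`:
    -- (i) `K`-equivariance: `κ ▷ (δ_Y ρ) = δ_{κ₍₁₎▷Y}(κ₍₂₎▷ρ)`
    (∀ (κ : K) (Y : P) (ρ : T →ₗ[k] P),
      (∀ (X : T) (b : B), ρ (rMod r1 r2 aB lT aT X b) = rMod r1 r2 aB lP aP (ρ X) b) →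
      adAct aT aP κ (delta r1 r2 aT aP brT brP π Y ρ)
        = deltaAct r1 r2 aT aP brT brP π Y ρ (Coalgebra.comul (R := k) κ)) ∧
    -- (ii) `δ_{[Y,Y']} = δ_Y ∘ δ_{Y'} − δ_{R_α▷Y'} ∘ δ_{R^α▷Y}`
    (∀ (Y Y' : P) (ρ : T →ₗ[k] P),
      (∀ (X : T) (b : B), ρ (rMod r1 r2 aB lT aT X b) = rMod r1 r2 aB lP aP (ρ X) b) →
      delta r1 r2 aT aP brT brP π (brP Y Y') ρ
        = delta r1 r2 aT aP brT brP π Y (delta r1 r2 aT aP brT brP π Y' ρ)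
          - ∑ i, delta r1 r2 aT aP brT brP π (aP (r2 i) Y')
              (delta r1 r2 aT aP brT brP π (aP (r1 i) Y) ρ)) := by
  have hδ := adAct_delta r1 r2 aT aP brT brP π hqc haT1 haTm haP1 haPm hTequiv hPequiv hπequiv
  refine ⟨fun κ Y ρ _ ↦ hδ κ Y ρ, fun Y Y' ρ _ ↦ ?_⟩
  ext X
  rw [LinearMap.sub_apply, LinearMap.sum_apply,
    delta_bracket_apply r1 r2 aT aP brT brP π hhex₁ haTm hTequiv hTjac hPjac hπbr,
    delta_delta_apply r1 r2 aT aP brT brP π hhex₂ haTm haPm hπequiv hδ,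
    sum_delta_delta_apply r1 r2 aT aP brT brP π hhex₂ htri₂ haTm haP1 haPm hπequiv hδ,
    yang_baxter_apply r1 r2 aT aP brT hqc hhex₂]
  abel

end Statement3
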